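/- arXiv:1607.05139 — 9 statements merged into one kernel-verified Lean document; each statement's English description precedes it below -/
import Mathlib

section
/- In a double auction with sorted seller valuations s_1 ≤ ... ≤ s_n and sorted buyer valuations b_1 ≥ ... ≥ b_n, the maximum gain-from-trade over all matchings of (a subset of) sellers to (a subset of) buyers equals Σ_{i=1}^{k} (b_i - s_i), where k is the largest index with s_k ≤ b_k (or 0 if no such index exists). -/
lemma sbba_key (n : ℕ) (f : ℕ → ℝ)
    (hf : ∀ i j, 1 ≤ i → i ≤ j → j ≤ n → f i ≤ f j) :
    ∀ m (T : Finset ℕ), T.card = m → T ⊆ Finset.Icc 1 n →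
      ∑ i ∈ Finset.Icc 1 m, f i ≤ ∑ i ∈ T, f i := by
  intro m
  induction m with
  | zero => intro T hcard _; simp [Finset.card_eq_zero.mp hcard]
  | succ m ih =>
    intro T hcard hsub
    have hne : T.Nonempty := Finset.card_pos.mp (by omega)
    set Mx := T.max' hne with hMxdef
    have hMxT : Mx ∈ T := T.max'_mem hne
    have hMx : 1 ≤ Mx ∧ Mx ≤ n := Finset.mem_Icc.mp (hsub hMxT)
    have hsub' : T ⊆ Finset.Icc 1 Mx := fun x hx =>
      Finset.mem_Icc.mpr ⟨(Finset.mem_Icc.mp (hsub hx)).1, T.le_max' x hx⟩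
    have hm : m + 1 ≤ Mx := by
      have := Finset.card_le_card hsub'
      rw [hcard, Nat.card_Icc] at this; omega
    have hT' : (T.erase Mx).card = m := by
      rw [Finset.card_erase_of_mem hMxT, hcard]
      omega
    have h1 := ih (T.erase Mx) hT' (fun x hx => hsub (Finset.erase_subset _ _ hx))
    have h2 : f (m + 1) ≤ f Mx := hf _ _ (by omega) hm hMx.2
    have hsplit : ∑ i ∈ T.erase Mx, f i + f Mx = ∑ i ∈ T, f i :=
      Finset.sum_erase_add T f hMxT
    have htop : ∑ i ∈ Finset.Icc 1 (m + 1), f i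
        = ∑ i ∈ Finset.Icc 1 m, f i + f (m + 1) :=
      Finset.sum_Icc_succ_top (by omega) f
    linarith

/-- The maximum gain-from-trade over all matchings (finite sets of seller-buyer pairs
with distinct sellers and distinct buyers, indices in `1..n`) equals
`Σ_{i=1}^{k} (b i - s i)`, where `k` is the largest index with `s k ≤ b k`
(or `0` if there is no such index).  Sellers sorted ascending, buyers descending. -/
theorem sbba_optimal_gft (n k : ℕ) (s b : ℕ → ℝ)
    (hs : ∀ i j, 1 ≤ i → i ≤ j → j ≤ n → s i ≤ s j)
    (hb : ∀ i j, 1 ≤ i → i ≤ j → j ≤ n → b j ≤ b i)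
    (hkn : k ≤ n)
    (hk : k = 0 ∨ (1 ≤ k ∧ s k ≤ b k))
    (hkmax : ∀ i, k < i → i ≤ n → b i < s i) :
    IsGreatest
      {g : ℝ | ∃ M : Finset (ℕ × ℕ),
        (∀ p ∈ M, 1 ≤ p.1 ∧ p.1 ≤ n ∧ 1 ≤ p.2 ∧ p.2 ≤ n) ∧
        (∀ p ∈ M, ∀ q ∈ M, p ≠ q → p.1 ≠ q.1 ∧ p.2 ≠ q.2) ∧
        g = ∑ p ∈ M, (b p.2 - s p.1)}
      (∑ i ∈ Finset.Icc 1 k, (b i - s i)) := by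
  constructor
  · -- membership: the diagonal matching
    refine ⟨(Finset.Icc 1 k).image (fun i => (i, i)), ?_, ?_, ?_⟩
    · intro p hp
      obtain ⟨i, hi, rfl⟩ := Finset.mem_image.mp hp
      rw [Finset.mem_Icc] at hi
      exact ⟨hi.1, by omega, hi.1, by omega⟩
    · intro p hp q hq hpq
      obtain ⟨i, hi, rfl⟩ := Finset.mem_image.mp hp
      obtain ⟨j, hj, rfl⟩ := Finset.mem_image.mp hq
      constructor <;> (simp only [ne_eq]; intro h; apply hpq; simp [h])
    · rw [Finset.sum_image (by intro x _ y _ h; exact (Prod.mk.inj h).1)]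
  · -- upper bound
    rintro g ⟨M, hrange, hdisj, rfl⟩
    set m := M.card with hm
    -- sellers
    have hsinj : Set.InjOn (Prod.fst : ℕ × ℕ → ℕ) ↑M := by
      intro p hp q hq h
      by_contra hne
      exact (hdisj p hp q hq hne).1 h
    have hbinj : Set.InjOn (Prod.snd : ℕ × ℕ → ℕ) ↑M := by
      intro p hp q hq h
      by_contra hne
      exact (hdisj p hp q hq hne).2 h
    have hTsub : M.image Prod.fst ⊆ Finset.Icc 1 n := by
      intro x hx
      obtain ⟨p, hp, rfl⟩ := Finset.mem_image.mp hx
      exact Finset.mem_Icc.mpr ⟨(hrange p hp).1, (hrange p hp).2.1⟩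
    have hUsub : M.image Prod.snd ⊆ Finset.Icc 1 n := by
      intro x hx
      obtain ⟨p, hp, rfl⟩ := Finset.mem_image.mp hx
      exact Finset.mem_Icc.mpr ⟨(hrange p hp).2.2.1, (hrange p hp).2.2.2⟩
    have hTcard : (M.image Prod.fst).card = m := Finset.card_image_of_injOn hsinj
    have hUcard : (M.image Prod.snd).card = m := Finset.card_image_of_injOn hbinj
    have hmn : m ≤ n := by
      have := Finset.card_le_card hTsub
      rw [hTcard, Nat.card_Icc] at this; omega
    have hS : ∑ i ∈ Finset.Icc 1 m, s i ≤ ∑ p ∈ M, s p.1 := by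
      rw [← Finset.sum_image (f := s) hsinj]
      exact sbba_key n s hs m _ hTcard hTsub
    have hB : ∑ p ∈ M, b p.2 ≤ ∑ i ∈ Finset.Icc 1 m, b i := by
      have := sbba_key n (fun i => -(b i))
        (fun i j h1 h2 h3 => neg_le_neg (hb i j h1 h2 h3)) m _ hUcard hUsub
      rw [← Finset.sum_image (f := b) hbinj]
      simp only [Finset.sum_neg_distrib] at this
      linarith
    have step1 : ∑ p ∈ M, (b p.2 - s p.1) ≤ ∑ i ∈ Finset.Icc 1 m, (b i - s i) := by
      rw [Finset.sum_sub_distrib, Finset.sum_sub_distrib]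
      linarith
    have step2 : ∑ i ∈ Finset.Icc 1 m, (b i - s i) ≤ ∑ i ∈ Finset.Icc 1 k, (b i - s i) := by
      rcases le_or_gt m k with hmk | hkm
      · apply Finset.sum_le_sum_of_subset_of_nonneg
        · exact Finset.Icc_subset_Icc_right hmk
        · intro i hi _
          rw [Finset.mem_Icc] at hi
          rcases hk with h0 | ⟨hk1, hks⟩
          · omega
          · have h1 : s i ≤ s k := hs i k hi.1 hi.2 hkn
            have h2 : b k ≤ b i := hb i k hi.1 hi.2 hkn
            linarith
      · have hsplit : Finset.Icc 1 m = Finset.Icc 1 k ∪ Finset.Ioc k m := by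
          ext a
          simp only [Finset.mem_Icc, Finset.mem_union, Finset.mem_Ioc]
          omega
        have hdis : Disjoint (Finset.Icc 1 k) (Finset.Ioc k m) := by
          rw [Finset.disjoint_left]
          intro a ha hb'
          rw [Finset.mem_Icc] at ha
          rw [Finset.mem_Ioc] at hb'
          omega
        rw [hsplit, Finset.sum_union hdis]
        have : ∑ i ∈ Finset.Ioc k m, (b i - s i) ≤ 0 := by
          apply Finset.sum_nonpos
          intro i hi
          rw [Finset.mem_Ioc] at hi
          have := hkmax i hi.1 (by omega)
          linarith
        linarith
    linarith
end

section
/- In the SBBA mechanism, the expected gain-from-trade is at least (1 - 1/k) times the optimal gain-from-trade Σ_{i=1}^{k}(b_i - s_i), where k ≥ 1 is the largest index with s_k ≤ b_k. -/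
open scoped Classical

/-- The expected gain-from-trade of the SBBA mechanism (all `k` efficient deals execute
when `s (k+1) ≤ b k`; otherwise buyer `k` and a uniformly random one of the first `k`
sellers are excluded) is at least `(1 - 1/k)` times the optimal gain-from-trade
`Σ_{i=1}^{k} (b i - s i)`, where `k ≥ 1` is the largest index with `s k ≤ b k`. -/
theorem sbba_expected_gft_bound (n k : ℕ) (s b : ℕ → ℝ)
    (hs : ∀ i j, 1 ≤ i → i ≤ j → j ≤ n → s i ≤ s j)
    (hb : ∀ i j, 1 ≤ i → i ≤ j → j ≤ n → b j ≤ b i)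
    (hk1 : 1 ≤ k) (hkn : k ≤ n) (hksb : s k ≤ b k)
    (hkmax : ∀ i, k < i → i ≤ n → b i < s i) :
    (1 - 1 / (k : ℝ)) * (∑ i ∈ Finset.Icc 1 k, (b i - s i)) ≤
      (if k < n ∧ s (k + 1) ≤ b k
        then ∑ i ∈ Finset.Icc 1 k, (b i - s i)
        else (∑ i ∈ Finset.Icc 1 (k - 1), b i)
          - (((k : ℝ) - 1) / (k : ℝ)) * ∑ i ∈ Finset.Icc 1 k, s i) := by
  have hk0 : (0:ℝ) < k := by exact_mod_cast hk1
  have hbk : ∀ i ∈ Finset.Icc 1 k, b k ≤ b i := by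
    intro i hi
    simp only [Finset.mem_Icc] at hi
    exact hb i k hi.1 hi.2 hkn
  have hsk : ∀ i ∈ Finset.Icc 1 k, s i ≤ s k := by
    intro i hi
    simp only [Finset.mem_Icc] at hi
    exact hs i k hi.1 hi.2 hkn
  have hnonneg : 0 ≤ ∑ i ∈ Finset.Icc 1 k, (b i - s i) := by
    apply Finset.sum_nonneg
    intro i hi
    have h1 := hbk i hi
    have h2 := hsk i hi
    linarith
  split_ifs with h
  · have h1 : (0:ℝ) ≤ 1 / (k:ℝ) := by positivity
    nlinarith [mul_nonneg h1 hnonneg]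
  · -- decompose sum over Icc 1 k as Icc 1 (k-1) plus top term
    have hkk : k = (k - 1) + 1 := (Nat.succ_pred_eq_of_pos hk1).symm
    set B := ∑ i ∈ Finset.Icc 1 (k - 1), b i with hB
    set S := ∑ i ∈ Finset.Icc 1 k, s i with hS
    have hsplitb : ∑ i ∈ Finset.Icc 1 k, b i = B + b k := by
      rw [hB, hkk]
      rw [Finset.sum_Icc_succ_top (by omega : 1 ≤ (k-1)+1), Nat.add_sub_cancel]
    have hsum : ∑ i ∈ Finset.Icc 1 k, (b i - s i) = (B + b k) - S := by
      rw [Finset.sum_sub_distrib, hsplitb]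
    have hcard : (Finset.Icc 1 (k-1)).card = k - 1 := by
      rw [Nat.card_Icc]; omega
    have key : ((k:ℝ) - 1) * b k ≤ B := by
      have h1 : (Finset.Icc 1 (k-1)).card • b k ≤ B := by
        apply Finset.card_nsmul_le_sum
        intro i hi
        simp only [Finset.mem_Icc] at hi
        exact hb i k hi.1 (by omega) hkn
      rw [hcard, nsmul_eq_mul] at h1
      have : ((k - 1 : ℕ) : ℝ) = (k:ℝ) - 1 := by
        push_cast [Nat.cast_sub hk1]; ring
      rwa [this] at h1
    have heq : (1 - 1 / (k:ℝ)) = ((k:ℝ) - 1) / k := by field_simp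
    rw [hsum, heq]
    have h2 : ((k:ℝ) - 1) / k * (B + b k) ≤ B := by
      rw [div_mul_eq_mul_div, div_le_iff₀ hk0]
      nlinarith [key]
    have expand : ((k:ℝ) - 1) / k * (B + b k - S)
        = ((k:ℝ) - 1) / k * (B + b k) - ((k:ℝ) - 1) / k * S := by ring
    linarith [expand ▸ le_refl (((k:ℝ) - 1) / k * (B + b k - S)), h2]
end

section
/- The SBBA price p = min(s_{k+1}, b_k) is a Walrasian equilibrium price: at price p, the number of buyers with valuation strictly above p is at most the number of sellers with valuation at most p, and the number of sellers with valuation strictly below p is at most the number of buyers with valuation at least p. Moreover, for any price q > min(s_{k+1}, b_k), |{i : s_i ≤ q}| > |{i : b_i ≥ q}| or there is excess supply |{i : s_i < q}| > |{i : b_i > q}|. -/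
open scoped Classical

lemma sbba_aux_le (n m : ℕ) (P : ℕ → Prop) [DecidablePred P]
    (h : ∀ i, 1 ≤ i → i ≤ n → P i → i ≤ m) :
    ((Finset.Icc 1 n).filter P).card ≤ m := by
  have hsub : (Finset.Icc 1 n).filter P ⊆ Finset.Icc 1 m := by
    intro i hi
    simp only [Finset.mem_filter, Finset.mem_Icc] at *
    exact ⟨hi.1.1, h i hi.1.1 hi.1.2 hi.2⟩
  calc ((Finset.Icc 1 n).filter P).card ≤ (Finset.Icc 1 m).card :=
        Finset.card_le_card hsub
    _ = m := by simp

lemma sbba_aux_ge (n m : ℕ) (P : ℕ → Prop) [DecidablePred P] (hmn : m ≤ n)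
    (h : ∀ i, 1 ≤ i → i ≤ m → P i) :
    m ≤ ((Finset.Icc 1 n).filter P).card := by
  have hsub : Finset.Icc 1 m ⊆ (Finset.Icc 1 n).filter P := by
    intro i hi
    simp only [Finset.mem_filter, Finset.mem_Icc] at *
    exact ⟨⟨hi.1, hi.2.trans hmn⟩, h i hi.1 hi.2⟩
  calc m = (Finset.Icc 1 m).card := by simp
    _ ≤ _ := Finset.card_le_card hsub

/-- The SBBA price `p = min (s (k+1)) (b k)` (with `s (k+1) = ∞` when `k = n`, so then
`p = b k`) is a Walrasian equilibrium price: the number of buyers strictly above `p` is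
at most the number of sellers at most `p`, and the number of sellers strictly below `p`
is at most the number of buyers at least `p`.  Moreover it is the highest such price:
every `q > p` has excess supply, i.e. `|{i : s i ≤ q}| > |{i : b i ≥ q}|` or
`|{i : s i < q}| > |{i : b i > q}|`. -/
theorem sbba_price_walrasian (n k : ℕ) (s b : ℕ → ℝ)
    (hs : ∀ i j, 1 ≤ i → i ≤ j → j ≤ n → s i ≤ s j)
    (hb : ∀ i j, 1 ≤ i → i ≤ j → j ≤ n → b j ≤ b i)
    (hk1 : 1 ≤ k) (hkn : k ≤ n) (hksb : s k ≤ b k)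
    (hkmax : ∀ i, k < i → i ≤ n → b i < s i) :
    letI p : ℝ := if k = n then b k else min (s (k + 1)) (b k)
    ((Finset.Icc 1 n).filter fun i => p < b i).card ≤
        ((Finset.Icc 1 n).filter fun i => s i ≤ p).card ∧
    ((Finset.Icc 1 n).filter fun i => s i < p).card ≤
        ((Finset.Icc 1 n).filter fun i => p ≤ b i).card ∧
    ∀ q : ℝ, p < q →
      ((Finset.Icc 1 n).filter fun i => q ≤ b i).card <
          ((Finset.Icc 1 n).filter fun i => s i ≤ q).card ∨
      ((Finset.Icc 1 n).filter fun i => q < b i).card <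
          ((Finset.Icc 1 n).filter fun i => s i < q).card := by
  set p : ℝ := if k = n then b k else min (s (k + 1)) (b k) with hpdef
  have h1n : 1 ≤ n := hk1.trans hkn
  have hpbk : p ≤ b k := by
    rw [hpdef]; split_ifs with h
    · exact le_refl _
    · exact min_le_right _ _
  have hskp : s k ≤ p := by
    rw [hpdef]; split_ifs with h
    · exact hksb
    · exact le_min (hs k (k + 1) hk1 (by omega) (by omega)) hksb
  have hsi : ∀ i, 1 ≤ i → i ≤ k → s i ≤ p :=
    fun i h1 h2 => (hs i k h1 h2 hkn).trans hskp
  have hbik : ∀ i, 1 ≤ i → i ≤ k → p ≤ b i :=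
    fun i h1 h2 => hpbk.trans (hb i k h1 h2 hkn)
  have hbi : ∀ i, k < i → i ≤ n → b i ≤ p := by
    intro i hki hin
    have hkln : k < n := lt_of_lt_of_le hki hin
    have h1 : b i ≤ b (k + 1) := hb (k + 1) i (by omega) (by omega) hin
    have h2 : b (k + 1) < s (k + 1) := hkmax (k + 1) (by omega) (by omega)
    have h3 : b i ≤ b k := hb k i hk1 (le_of_lt hki) hin
    rw [hpdef, if_neg (by omega)]
    exact le_min (le_of_lt (lt_of_le_of_lt h1 h2)) h3
  refine ⟨?_, ?_, ?_⟩
  · refine le_trans (sbba_aux_le n k _ ?_) (sbba_aux_ge n k _ hkn hsi)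
    intro i h1 hin hPi
    by_contra hik
    exact absurd (hbi i (by omega) hin) (not_le.mpr hPi)
  · refine le_trans (sbba_aux_le n k _ ?_) (sbba_aux_ge n k _ hkn hbik)
    intro i h1 hin hPi
    by_contra hik
    have hkln : k < n := by omega
    have : p ≤ s i := by
      rw [hpdef, if_neg (by omega)]
      exact (min_le_left _ _).trans (hs (k + 1) i (by omega) (by omega) hin)
    exact absurd this (not_le.mpr hPi)
  · intro q hpq
    by_cases hkeq : k = n
    · -- all sellers ≤ p < q ; buyer n has b n = p < q
      left
      have hbn : b n = p := by rw [hpdef, if_pos hkeq, hkeq]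
      have hle : ((Finset.Icc 1 n).filter fun i => q ≤ b i).card ≤ n - 1 := by
        refine sbba_aux_le n (n - 1) _ ?_
        intro i h1 hin hPi
        rcases lt_or_eq_of_le hin with h | h
        · omega
        · exfalso; rw [h, hbn] at hPi; exact absurd hpq (not_lt.mpr hPi)
      have hge : n ≤ ((Finset.Icc 1 n).filter fun i => s i ≤ q).card := by
        refine sbba_aux_ge n n _ le_rfl ?_
        intro i h1 hin
        exact le_of_lt (lt_of_le_of_lt ((hs i n h1 hin le_rfl).trans
          (hkeq ▸ hskp)) hpq)
      omega
    · have hkln : k < n := lt_of_le_of_ne hkn hkeq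
      by_cases hq : s (k + 1) < q
      · left
        have hle : ((Finset.Icc 1 n).filter fun i => q ≤ b i).card ≤ k := by
          refine sbba_aux_le n k _ ?_
          intro i h1 hin hPi
          by_contra hik
          have h2 : b i ≤ b (k + 1) := hb (k + 1) i (by omega) (by omega) hin
          have h3 : b (k + 1) < s (k + 1) := hkmax (k + 1) (by omega) (by omega)
          exact absurd hPi (not_le.mpr (lt_of_le_of_lt h2 (h3.trans hq)))
        have hge : k + 1 ≤ ((Finset.Icc 1 n).filter fun i => s i ≤ q).card := by
          refine sbba_aux_ge n (k + 1) _ (by omega) ?_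
          intro i h1 hik
          exact le_of_lt (lt_of_le_of_lt (hs i (k + 1) h1 hik (by omega)) hq)
        omega
      · right
        -- here q ≤ s (k+1), so p = b k and b k < q
        have hbkq : b k < q := by
          have hps : p = b k := by
            rw [hpdef, if_neg hkeq]
            rcases min_cases (s (k + 1)) (b k) with ⟨h1, h2⟩ | ⟨h1, h2⟩
            · exfalso
              rw [hpdef, if_neg hkeq, h1] at hpq
              exact hq hpq
            · exact h1
          rwa [hps] at hpq
        have hle : ((Finset.Icc 1 n).filter fun i => q < b i).card ≤ k - 1 := by
          refine sbba_aux_le n (k - 1) _ ?_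
          intro i h1 hin hPi
          by_contra hik
          have h2 : b i ≤ b k := hb k i hk1 (by omega) hin
          exact absurd hPi (not_lt.mpr (h2.trans (le_of_lt hbkq)))
        have hge : k ≤ ((Finset.Icc 1 n).filter fun i => s i < q).card := by
          refine sbba_aux_ge n k _ hkn ?_
          intro i h1 hik
          exact lt_of_le_of_lt ((hs i k h1 hik hkn).trans hksb) hbkq
        omega
end

section
/- In the SBBA mechanism, a buyer's winning probability is monotone in his bid: fixing all other bids and asks, if a buyer wins (trades with probability 1) with bid b, then he also wins with any bid b' > b. -/
open scoped Classical

/-! Formalization of the SBBA mechanism on raw bid profiles.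
Sellers' asks `A` are sorted ascending and buyers' bids `B` descending using
`Tuple.sort` (which also provides a fixed tie-breaking order).  Ranks are 0-based:
the number of efficient deals `numDeals` is the largest `K` with
`sortedAsks (K-1) ≤ sortedBids (K-1)`; "`s (k+1)`" is `sortedAsks K` and
"`b k`" is `sortedBids (K-1)`. -/

/-- The `i`-th lowest ask (0-based); arbitrary value `0` beyond the range. -/
noncomputable def sortedAsks {n : ℕ} (A : Fin n → ℝ) : ℕ → ℝ := fun i =>
  if h : i < n then A (Tuple.sort A ⟨i, h⟩) else 0

/-- The `i`-th highest bid (0-based); arbitrary value `0` beyond the range. -/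
noncomputable def sortedBids {n : ℕ} (B : Fin n → ℝ) : ℕ → ℝ := fun i =>
  if h : i < n then B (Tuple.sort (fun j => -B j) ⟨i, h⟩) else 0

/-- `K`, the number of efficient deals: the number of positions where the sorted
ask is at most the sorted bid. -/
noncomputable def numDeals {n : ℕ} (A B : Fin n → ℝ) : ℕ :=
  ((Finset.range n).filter fun i => sortedAsks A i ≤ sortedBids B i).card

/-- 0-based rank of seller `j` in the ascending order of asks. -/
noncomputable def sellerRank {n : ℕ} (A : Fin n → ℝ) (j : Fin n) : ℕ :=
  ((Tuple.sort A).symm j : ℕ)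

/-- 0-based rank of buyer `j` in the descending order of bids. -/
noncomputable def buyerRank {n : ℕ} (B : Fin n → ℝ) (j : Fin n) : ℕ :=
  ((Tuple.sort (fun i => -B i)).symm j : ℕ)

/-- Case 1 of SBBA: `s (k+1) ≤ b k` (in particular `k ≥ 1` and `k < n`). -/
def caseOne {n : ℕ} (A B : Fin n → ℝ) : Prop :=
  1 ≤ numDeals A B ∧ numDeals A B < n ∧
    sortedAsks A (numDeals A B) ≤ sortedBids B (numDeals A B - 1)

/-- The single SBBA trading price `min (s (k+1)) (b k)`:
`s (k+1)` in case 1, `b k` in case 2. -/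
noncomputable def price {n : ℕ} (A B : Fin n → ℝ) : ℝ :=
  if caseOne A B then sortedAsks A (numDeals A B) else sortedBids B (numDeals A B - 1)

/-- Buyer `j` wins (trades with probability 1): in case 1 the first `K` buyers win,
in case 2 the first `K - 1` buyers win. -/
noncomputable def buyerWins {n : ℕ} (A B : Fin n → ℝ) (j : Fin n) : Prop :=
  if caseOne A B then buyerRank B j < numDeals A B
  else buyerRank B j + 1 < numDeals A B

/-- Seller `j`'s probability of trading: `1` for the first `K` sellers in case 1,
`1 - 1/K` for them in case 2 (one of them, uniformly random, is excluded),
and `0` for all other sellers. -/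
noncomputable def sellerProb {n : ℕ} (A B : Fin n → ℝ) (j : Fin n) : ℝ :=
  if sellerRank A j < numDeals A B then
    (if caseOne A B then 1 else 1 - 1 / (numDeals A B : ℝ))
  else 0

/-! Raising a bid moves the buyer weakly up in the descending order of bids and raises every
order statistic of the bids weakly. Hence `k` can only grow, and if it stays the same then case 1
(`s (k+1) ≤ b k`) persists because `b k` only grows; so the number of winning buyers (`k` in case 1,
`k - 1` in case 2) never decreases while the buyer's rank never increases. -/

open Finset

namespace Tuple

variable {n : ℕ} {α : Type*} [LinearOrder α]

theorem sort_symm_lt_sort_symm_iff (f : Fin n → α) (i j : Fin n) :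
    (sort f).symm i < (sort f).symm j ↔ toLex (f i, i) < toLex (f j, j) := by
  have hs : StrictMono ((sort f).trans (graphEquiv₁ f)) := eq_sort_iff'.mp rfl
  rw [← hs.lt_iff_lt]
  simp only [Equiv.trans_apply, Equiv.apply_symm_apply]
  exact Subtype.mk_lt_mk

theorem val_sort_symm_eq_card (f : Fin n → α) (j : Fin n) :
    ((sort f).symm j : ℕ) = #{i | toLex (f i, i) < toLex (f j, j)} := by
  simp_rw [← sort_symm_lt_sort_symm_iff, ← Fin.card_Iio]
  exact (card_equiv (sort f).symm (by simp)).symm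

theorem sort_symm_update_le (f : Fin n → α) (j : Fin n) {a : α} (ha : a ≤ f j) :
    (sort (Function.update f j a)).symm j ≤ (sort f).symm j := by
  rw [Fin.le_iff_val_le_val, val_sort_symm_eq_card, val_sort_symm_eq_card]
  refine card_le_card fun i hi => ?_
  simp only [mem_filter, mem_univ, true_and] at hi ⊢
  have hij : i ≠ j := by rintro rfl; exact lt_irrefl _ hi
  rw [Function.update_of_ne hij, Function.update_self] at hi
  exact hi.trans_le (Prod.Lex.toLex_mono (Prod.mk_le_mk.2 ⟨ha, le_rfl⟩))

theorem card_filter_apply_sort (f : Fin n → α) (p : α → Prop) [DecidablePred p] :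
    #{i | p (f (sort f i))} = #{i | p (f i)} :=
  card_equiv (sort f) (by simp)

theorem comp_sort_mono : Monotone fun f : Fin n → α => f ∘ sort f := by
  intro f g hfg i
  -- `f (sort f i) ≤ a` iff more than `i` values of `f` are `≤ a`, and `f ≤ g` only adds such values.
  set a := g (sort g i)
  have hg : (i : ℕ) < #{k | g (sort g k) ≤ a} :=
    (lt_card_le_iff_apply_le_of_monotone (monotone_sort g)).2 le_rfl
  have hgf : #{k | g k ≤ a} ≤ #{k | f k ≤ a} :=
    card_le_card (monotone_filter_right _ fun k _ => (hfg k).trans)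
  rw [card_filter_apply_sort g (· ≤ a)] at hg
  rw [← card_filter_apply_sort f (· ≤ a)] at hgf
  exact (lt_card_le_iff_apply_le_of_monotone (monotone_sort f)).1 (hg.trans_le hgf)

end Tuple

theorem sortedBids_mono {n : ℕ} : Monotone (sortedBids (n := n)) := by
  intro B B' hB i
  unfold sortedBids
  split_ifs with hi
  · exact neg_le_neg_iff.1 (Tuple.comp_sort_mono (neg_le_neg hB) ⟨i, hi⟩)
  · exact le_rfl

theorem numDeals_mono {n : ℕ} (A : Fin n → ℝ) : Monotone (numDeals A) := fun _ _ hB =>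
  card_le_card <| monotone_filter_right _ fun i _ hi => hi.trans (sortedBids_mono hB i)

theorem caseOne_of_le_of_numDeals_eq {n : ℕ} {A B B' : Fin n → ℝ} (hB : B ≤ B')
    (hK : numDeals A B = numDeals A B') (h : caseOne A B) : caseOne A B' := by
  obtain ⟨hK₁, hKn, hs⟩ := h
  exact ⟨hK ▸ hK₁, hK ▸ hKn, hK ▸ hs.trans (sortedBids_mono hB _)⟩

noncomputable def numWinningBuyers {n : ℕ} (A B : Fin n → ℝ) : ℕ :=
  if caseOne A B then numDeals A B else numDeals A B - 1

theorem buyerWins_iff {n : ℕ} (A B : Fin n → ℝ) (j : Fin n) :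
    buyerWins A B j ↔ buyerRank B j < numWinningBuyers A B := by
  unfold buyerWins numWinningBuyers
  split_ifs <;> omega

theorem numWinningBuyers_mono {n : ℕ} (A : Fin n → ℝ) : Monotone (numWinningBuyers A) := by
  intro B B' hB
  have hK := numDeals_mono A hB
  unfold numWinningBuyers
  split_ifs with h h'
  · exact hK
  · have hne : numDeals A B ≠ numDeals A B' :=
      fun hK' => h' (caseOne_of_le_of_numDeals_eq hB hK' h)
    omega
  all_goals omega

theorem buyerRank_update_le {n : ℕ} (B : Fin n → ℝ) (j : Fin n) {b : ℝ} (hb : B j ≤ b) :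
    buyerRank (Function.update B j b) j ≤ buyerRank B j := by
  have hneg : (fun i => -Function.update B j b i) = Function.update (fun i => -B i) j (-b) :=
    Function.comp_update Neg.neg B j b
  unfold buyerRank
  rw [hneg]
  exact Tuple.sort_symm_update_le _ j (neg_le_neg hb)

/-- Monotonicity for buyers in SBBA: fixing all other bids and asks, if buyer `j`
wins with bid `B j`, he also wins with any higher bid `b' > B j`. -/
theorem sbba_buyer_monotone {n : ℕ} (A B : Fin n → ℝ) (j : Fin n) (b' : ℝ)
    (hwin : buyerWins A B j) (hup : B j < b') :
    buyerWins A (Function.update B j b') j := by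
  rw [buyerWins_iff] at hwin ⊢
  calc buyerRank (Function.update B j b') j ≤ buyerRank B j := buyerRank_update_le B j hup.le
    _ < numWinningBuyers A B := hwin
    _ ≤ numWinningBuyers A (Function.update B j b') :=
      numWinningBuyers_mono A (le_update_self_iff.2 hup.le)
end

section
/- In the SBBA mechanism, a seller's winning probability is monotone in her ask: fixing all other bids and asks, if a seller has positive winning probability with ask a, then with any ask a' < a she has at least the same winning probability. -/
open scoped Classical

section Aux

variable {n : ℕ}

/-- Counting characterization of order statistics: for any downward-closed predicate `p`,
`p` holds at the `i`-th sorted value iff more than `i` entries satisfy `p`. -/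
lemma rank_lt_card_iff (f : Fin n → ℝ) (p : ℝ → Prop) [DecidablePred p]
    (hp : ∀ ⦃x y : ℝ⦄, y ≤ x → p x → p y) (i : Fin n) :
    (i : ℕ) < (Finset.univ.filter fun t => p (f t)).card ↔ p (f (Tuple.sort f i)) := by
  have hmono : Monotone (f ∘ Tuple.sort f) := Tuple.monotone_sort f
  have hcard : (Finset.univ.filter fun t => p (f t)).card
      = (Finset.univ.filter fun m => p (f (Tuple.sort f m))).card := by
    rw [← Fintype.card_subtype, ← Fintype.card_subtype]
    exact Fintype.card_congr ((Tuple.sort f).subtypeEquiv (fun m => Iff.rfl)).symm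
  rw [hcard]
  constructor
  · intro h
    by_contra hpi
    have hsub : (Finset.univ.filter fun m => p (f (Tuple.sort f m))) ⊆ Finset.Iio i := by
      intro m hm
      simp only [Finset.mem_filter, Finset.mem_univ, true_and] at hm
      rw [Finset.mem_Iio]
      by_contra hmi
      exact hpi (hp (hmono (le_of_not_gt hmi)) hm)
    have := (Finset.card_le_card hsub).trans_eq (Fin.card_Iio i)
    omega
  · intro h
    have hsub : Finset.Iic i ⊆ Finset.univ.filter fun m => p (f (Tuple.sort f m)) := by
      intro m hm
      rw [Finset.mem_Iic] at hm
      simp only [Finset.mem_filter, Finset.mem_univ, true_and]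
      exact hp (hmono hm) h
    have := (Fin.card_Iic i).symm.trans_le (Finset.card_le_card hsub)
    omega

lemma sortedAsks_apply (A : Fin n → ℝ) {i : ℕ} (h : i < n) :
    sortedAsks A i = A (Tuple.sort A ⟨i, h⟩) := dif_pos h

lemma sortedAsks_le_iff (A : Fin n → ℝ) {i : ℕ} (h : i < n) (c : ℝ) :
    sortedAsks A i ≤ c ↔ i < (Finset.univ.filter fun t => A t ≤ c).card := by
  rw [sortedAsks_apply A h]
  exact (rank_lt_card_iff A (· ≤ c) (fun x y hxy hx => le_trans hxy hx) ⟨i, h⟩).symm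

lemma sortedAsks_lt_iff (A : Fin n → ℝ) {i : ℕ} (h : i < n) (c : ℝ) :
    sortedAsks A i < c ↔ i < (Finset.univ.filter fun t => A t < c).card := by
  rw [sortedAsks_apply A h]
  exact (rank_lt_card_iff A (· < c) (fun x y hxy hx => lt_of_le_of_lt hxy hx) ⟨i, h⟩).symm

lemma sortedAsks_mono (A : Fin n → ℝ) {i i' : ℕ} (hii : i ≤ i') (h : i' < n) :
    sortedAsks A i ≤ sortedAsks A i' := by
  rw [sortedAsks_apply A (lt_of_le_of_lt hii h), sortedAsks_apply A h]
  exact Tuple.monotone_sort A (show (⟨i, lt_of_le_of_lt hii h⟩ : Fin n) ≤ ⟨i', h⟩ from hii)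

lemma sortedBids_anti (B : Fin n → ℝ) {i i' : ℕ} (hii : i ≤ i') (h : i' < n) :
    sortedBids B i' ≤ sortedBids B i := by
  unfold sortedBids
  rw [dif_pos h, dif_pos (lt_of_le_of_lt hii h)]
  have := Tuple.monotone_sort (fun t => -B t)
    (show (⟨i, lt_of_le_of_lt hii h⟩ : Fin n) ≤ ⟨i', h⟩ from hii)
  simp only [Function.comp_apply] at this
  linarith [this]

lemma numDeals_le (A B : Fin n → ℝ) : numDeals A B ≤ n := by
  unfold numDeals
  exact (Finset.card_filter_le _ _).trans (by simp)

lemma lt_numDeals_iff (A B : Fin n → ℝ) {i : ℕ} (h : i < n) :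
    i < numDeals A B ↔ sortedAsks A i ≤ sortedBids B i := by
  constructor
  · intro hi
    by_contra hpi
    have hsub : ((Finset.range n).filter fun m => sortedAsks A m ≤ sortedBids B m)
        ⊆ Finset.range i := by
      intro m hm
      simp only [Finset.mem_filter, Finset.mem_range] at hm ⊢
      by_contra hmi
      push_neg at hmi
      exact hpi (le_trans (sortedAsks_mono A hmi hm.1)
        (le_trans hm.2 (sortedBids_anti B hmi hm.1)))
    have := (Finset.card_le_card hsub).trans_eq (Finset.card_range i)
    unfold numDeals at hi
    omega
  · intro hs
    have hsub : Finset.range (i + 1)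
        ⊆ (Finset.range n).filter fun m => sortedAsks A m ≤ sortedBids B m := by
      intro m hm
      simp only [Finset.mem_range] at hm
      have hmn : m < n := by omega
      simp only [Finset.mem_filter, Finset.mem_range]
      exact ⟨hmn, le_trans (sortedAsks_mono A (by omega) h)
        (le_trans hs (sortedBids_anti B (by omega) h))⟩
    have := ((Finset.card_range (i + 1)).symm.trans_le (Finset.card_le_card hsub))
    unfold numDeals
    omega

lemma sortedAsks_sellerRank (A : Fin n → ℝ) (j : Fin n) (h : sellerRank A j < n) :
    sortedAsks A (sellerRank A j) = A j := by
  rw [sortedAsks_apply A h]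
  congr 1
  have : (⟨sellerRank A j, h⟩ : Fin n) = (Tuple.sort A).symm j :=
    Fin.eta ((Tuple.sort A).symm j) h
  rw [this, Equiv.apply_symm_apply]

lemma sellerRank_lt (A : Fin n → ℝ) (j : Fin n) : sellerRank A j < n :=
  ((Tuple.sort A).symm j).isLt

end Aux

/-- Monotonicity for sellers in SBBA: fixing all other bids and asks, if seller `j`
has positive winning probability with ask `A j`, then with any lower ask `a' < A j`
her winning probability is at least as large. -/
theorem sbba_seller_monotone {n : ℕ} (A B : Fin n → ℝ) (j : Fin n) (a' : ℝ)
    (hpos : 0 < sellerProb A B j) (hdown : a' < A j) :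
    sellerProb A B j ≤ sellerProb (Function.update A j a') B j := by
  set A' : Fin n → ℝ := Function.update A j a' with hA'def
  set K := numDeals A B with hKdef
  have hr : sellerRank A j < K := by
    by_contra h
    rw [sellerProb, if_neg h] at hpos
    exact lt_irrefl 0 hpos
  have hKn : K ≤ n := numDeals_le A B
  have hrn : sellerRank A j < n := sellerRank_lt A j
  have hAj : sortedAsks A (sellerRank A j) = A j := sortedAsks_sellerRank A j hrn
  have hA'le : ∀ t, A' t ≤ A t := by
    intro t
    rcases eq_or_ne t j with rfl | h
    · rw [hA'def, Function.update_self]; exact hdown.le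
    · rw [hA'def, Function.update_of_ne h]
  -- sorted asks can only drop pointwise
  have hs'le : ∀ i, i < n → sortedAsks A' i ≤ sortedAsks A i := by
    intro i hi
    rw [sortedAsks_le_iff A' hi]
    refine lt_of_lt_of_le ((sortedAsks_le_iff A hi _).mp le_rfl) ?_
    exact Finset.card_le_card (fun t ht => by
      simp only [Finset.mem_filter, Finset.mem_univ, true_and] at ht ⊢
      exact le_trans (hA'le t) ht)
  -- the K-th sorted ask does not drop
  have hs'K : ∀ hKlt : K < n, sortedAsks A K ≤ sortedAsks A' K := by
    intro hKlt
    by_contra h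
    push_neg at h
    rw [sortedAsks_lt_iff A' hKlt] at h
    set c := sortedAsks A K with hc
    have hcardA : (Finset.univ.filter fun t => A t < c).card ≤ K := by
      by_contra hcc
      push_neg at hcc
      exact lt_irrefl c ((sortedAsks_lt_iff A hKlt c).mpr hcc)
    have hb : (Finset.univ.filter fun t => A' t < c).card ≤ K := by
      by_cases hj : A j < c
      · refine le_trans (Finset.card_le_card fun t ht => ?_) hcardA
        simp only [Finset.mem_filter, Finset.mem_univ, true_and] at ht ⊢
        rcases eq_or_ne t j with rfl | hne
        · exact hj
        · rwa [hA'def, Function.update_of_ne hne] at ht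
      · push_neg at hj
        have hK1n : K - 1 < n := by omega
        have hle : ¬ sortedAsks A (K - 1) < c := by
          push_neg
          calc c ≤ A j := hj
            _ = sortedAsks A (sellerRank A j) := hAj.symm
            _ ≤ sortedAsks A (K - 1) := sortedAsks_mono A (by omega) hK1n
        rw [sortedAsks_lt_iff A hK1n] at hle
        push_neg at hle
        have hsub : (Finset.univ.filter fun t => A' t < c)
            ⊆ insert j (Finset.univ.filter fun t => A t < c) := by
          intro t ht
          simp only [Finset.mem_filter, Finset.mem_univ, true_and, Finset.mem_insert] at ht ⊢
          rcases eq_or_ne t j with rfl | hne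
          · exact Or.inl rfl
          · right; rwa [hA'def, Function.update_of_ne hne] at ht
        have := (Finset.card_le_card hsub).trans (Finset.card_insert_le _ _)
        omega
    omega
  have hs'Keq : ∀ hKlt : K < n, sortedAsks A' K = sortedAsks A K :=
    fun hKlt => le_antisymm (hs'le K hKlt) (hs'K hKlt)
  -- the number of deals is unchanged
  have hK' : numDeals A' B = K := by
    have h1 : K ≤ numDeals A' B := by
      have hK1n : K - 1 < n := by omega
      have hb : sortedAsks A' (K - 1) ≤ sortedBids B (K - 1) :=
        le_trans (hs'le (K - 1) hK1n) ((lt_numDeals_iff A B hK1n).mp (by omega))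
      have := (lt_numDeals_iff A' B hK1n).mpr hb
      omega
    have h2 : numDeals A' B ≤ K := by
      by_cases hKlt : K < n
      · by_contra h
        push_neg at h
        have hs := (lt_numDeals_iff A' B hKlt).mp h
        have h3 : ¬ sortedAsks A K ≤ sortedBids B K := by
          intro hcon
          exact lt_irrefl K ((lt_numDeals_iff A B hKlt).mpr hcon)
        exact h3 (le_trans (hs'K hKlt) hs)
      · have := numDeals_le A' B
        omega
    omega
  -- case one is unchanged
  have hcase : caseOne A' B ↔ caseOne A B := by
    unfold caseOne
    rw [hK', ← hKdef]
    by_cases hKlt : K < n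
    · rw [hs'Keq hKlt]
    · simp [hKlt]
  -- seller j still trades
  have hr' : sellerRank A' j < K := by
    by_contra h
    push_neg at h
    have hr'n : sellerRank A' j < n := sellerRank_lt A' j
    have hKlt : K < n := lt_of_le_of_lt h hr'n
    have hA'j : sortedAsks A' (sellerRank A' j) = A' j := sortedAsks_sellerRank A' j hr'n
    have hcontra : A j ≤ a' := by
      calc A j = sortedAsks A (sellerRank A j) := hAj.symm
        _ ≤ sortedAsks A K := sortedAsks_mono A hr.le hKlt
        _ = sortedAsks A' K := (hs'Keq hKlt).symm
        _ ≤ sortedAsks A' (sellerRank A' j) := sortedAsks_mono A' h hr'n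
        _ = a' := by rw [hA'j, hA'def, Function.update_self]
    linarith
  rw [sellerProb, sellerProb, hK', ← hKdef, if_pos hr, if_pos hr']
  by_cases hc : caseOne A B
  · rw [if_pos hc, if_pos (hcase.mpr hc)]
  · rw [if_neg hc, if_neg (fun h => hc (hcase.mp h))]
end

section
/- The SBBA mechanism is dominant-strategy truthful for buyers: for every buyer with true valuation v, every profile of other agents' reports, and every realization of the mechanism's randomness, the buyer's utility (v - p if he trades at price p, 0 otherwise) when bidding v is at least his utility when bidding any other value b. -/
open scoped Classical

/-
Buyer `j` faces a threshold.  Raising a winning bid leaves the number `K` of efficient deals,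
the case of the mechanism and the price unchanged, because the sorted bids after the buyer's
position do not move; and if a lower bid `x` loses where `y` wins, then `x` is at most the
price under `y`.  Since a winner never pays more than his bid, bidding the true value is optimal,
as for any monotone allocation rule with a bid-independent price.
-/

open Finset Function

namespace SBBA

theorem utility_le_of_threshold_price {α : Type*} [AddCommGroup α] [LinearOrder α]
    [IsOrderedAddMonoid α] {win : α → Prop} [DecidablePred win] {pay : α → α}
    (h_ir : ∀ x, win x → pay x ≤ x)
    (h_mono : ∀ x y, x ≤ y → win x → win y ∧ pay y = pay x)
    (h_thr : ∀ x y, x ≤ y → win y → ¬ win x → x ≤ pay y) (v b : α) :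
    (if win b then v - pay b else 0) ≤ (if win v then v - pay v else 0) := by
  by_cases hb : win b <;> by_cases hv : win v <;> simp only [hb, hv, if_true, if_false, le_refl]
  · rcases le_total b v with h | h
    · rw [(h_mono b v h hb).2]
    · rw [(h_mono v b h hv).2]
  · have hvb : v ≤ b := le_of_not_ge fun h => hv (h_mono b v h hb).1
    exact sub_nonpos.2 (h_thr v b hvb hb hv)
  · exact sub_nonneg.2 (h_ir v hv)

theorem lt_card_filter_range_iff {p : ℕ → Prop} [DecidablePred p] {n i : ℕ}
    (hp : ∀ a b, a ≤ b → b < n → p b → p a) :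
    i < #{k ∈ range n | p k} ↔ i < n ∧ p i := by
  constructor
  · intro hi
    by_contra h
    have hsub : {k ∈ range n | p k} ⊆ range i := by
      intro k hk
      simp only [mem_filter, mem_range] at hk ⊢
      by_contra hik
      exact h ⟨by omega, hp i k (by omega) hk.1 hk.2⟩
    simpa using hi.trans_le (card_le_card hsub)
  · rintro ⟨hin, hpi⟩
    have hsub : range (i + 1) ⊆ {k ∈ range n | p k} := by
      intro k hk
      simp only [mem_filter, mem_range] at hk ⊢
      exact ⟨by omega, hp k i (by omega) hin hpi⟩
    simpa using card_le_card hsub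

variable {n : ℕ}

noncomputable def numBidsGe (B : Fin n → ℝ) (t : ℝ) : ℕ := #{l | t ≤ B l}

section Bids
variable (B : Fin n → ℝ) (j : Fin n)

theorem le_sortedBids_iff {t : ℝ} {i : ℕ} (hi : i < n) :
    t ≤ sortedBids B i ↔ i < numBidsGe B t := by
  set σ := Tuple.sort fun l => -B l
  have hanti : Antitone (B ∘ σ) := fun p q hpq => by
    simpa using Tuple.monotone_sort (fun l => -B l) hpq
  have hcard : #{p | t ≤ B (σ p)} = numBidsGe B t := by
    rw [numBidsGe, card_filter, card_filter]
    exact Equiv.sum_comp σ fun l => if t ≤ B l then 1 else 0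
  rw [sortedBids, dif_pos hi, ← hcard]
  exact (Tuple.lt_card_ge_iff_apply_ge_of_antitone (j := ⟨i, hi⟩) hanti).symm

theorem sortedBids_anti {i k : ℕ} (hik : i ≤ k) (hk : k < n) :
    sortedBids B k ≤ sortedBids B i :=
  (le_sortedBids_iff B (hik.trans_lt hk)).2 (hik.trans_lt ((le_sortedBids_iff B hk).1 le_rfl))

theorem buyerRank_lt : buyerRank B j < n :=
  ((Tuple.sort fun i => -B i).symm j).isLt

@[simp]
theorem sortedBids_buyerRank : sortedBids B (buyerRank B j) = B j := by
  simp [sortedBids, buyerRank]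

theorem le_iff_buyerRank_lt_numBidsGe (t : ℝ) : t ≤ B j ↔ buyerRank B j < numBidsGe B t := by
  rw [← le_sortedBids_iff B (buyerRank_lt B j), sortedBids_buyerRank]

end Bids

theorem numBidsGe_mono {B B' : Fin n → ℝ} (h : B ≤ B') (t : ℝ) :
    numBidsGe B t ≤ numBidsGe B' t :=
  card_le_card (monotone_filter_right _ fun l _ htl => htl.trans (h l))

theorem sortedBids_mono {B B' : Fin n → ℝ} (h : B ≤ B') (i : ℕ) :
    sortedBids B i ≤ sortedBids B' i := by
  by_cases hi : i < n
  · rw [le_sortedBids_iff B' hi]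
    exact ((le_sortedBids_iff B hi).1 le_rfl).trans_le (numBidsGe_mono h _)
  · simp [sortedBids, hi]

section Update
variable (B : Fin n → ℝ) (j : Fin n) {x y : ℝ}

theorem numBidsGe_update_add (x y t : ℝ) :
    numBidsGe (update B j x) t + (if t ≤ y then 1 else 0) =
      numBidsGe (update B j y) t + (if t ≤ x then 1 else 0) := by
  have hsplit (z : ℝ) : numBidsGe (update B j z) t =
      (if t ≤ z then 1 else 0) + ∑ l ∈ univ.erase j, if t ≤ B l then 1 else 0 := by
    rw [numBidsGe, card_filter, ← add_sum_erase _ _ (mem_univ j), update_self]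
    congr 1
    exact sum_congr rfl fun l hl => by rw [update_of_ne (ne_of_mem_erase hl)]
  rw [hsplit, hsplit]
  ring

theorem sortedBids_update_buyerRank (x : ℝ) :
    sortedBids (update B j x) (buyerRank (update B j x) j) = x := by
  simp

theorem buyerRank_update_antitone : Antitone fun x => buyerRank (update B j x) j := by
  intro x y hxy
  dsimp only
  rcases hxy.eq_or_lt with rfl | hlt
  · rfl
  have hry : buyerRank (update B j y) j < numBidsGe (update B j y) y := by
    simpa using le_iff_buyerRank_lt_numBidsGe (update B j y) j y
  have hrx : numBidsGe (update B j x) y ≤ buyerRank (update B j x) j := by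
    simpa [hlt] using (le_iff_buyerRank_lt_numBidsGe (update B j x) j y).not
  have hadd := numBidsGe_update_add B j x y y
  simp only [le_refl, if_true, not_le.2 hlt, if_false] at hadd
  omega

theorem sortedBids_update_of_buyerRank_lt (hxy : x ≤ y) {i : ℕ} (hi : i < n)
    (hr : buyerRank (update B j x) j < i) :
    sortedBids (update B j y) i = sortedBids (update B j x) i := by
  refine le_antisymm ?_ (sortedBids_mono (update_le_update_iff'.2 hxy) i)
  set t := sortedBids (update B j y) i
  have hty : i < numBidsGe (update B j y) t := (le_sortedBids_iff _ hi).1 le_rfl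
  have hadd := numBidsGe_update_add B j x y t
  rw [le_sortedBids_iff _ hi]
  -- the counts at `x` and `y` differ only for `t ∈ (x, y]`, reached by at most `rank < i` bids
  by_cases htx : t ≤ x
  · simp only [htx, htx.trans hxy, if_true] at hadd
    omega
  · have hrx : numBidsGe (update B j x) t ≤ buyerRank (update B j x) j := by
      simpa [htx] using (le_iff_buyerRank_lt_numBidsGe (update B j x) j t).not
    split_ifs at hadd <;> omega

end Update

section Deals
variable (A : Fin n → ℝ)

theorem sortedAsks_mono {i k : ℕ} (hik : i ≤ k) (hk : k < n) :
    sortedAsks A i ≤ sortedAsks A k := by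
  have hi : i < n := hik.trans_lt hk
  simp only [sortedAsks, dif_pos hi, dif_pos hk]
  exact Tuple.monotone_sort A (show (⟨i, hi⟩ : Fin n) ≤ ⟨k, hk⟩ from hik)

theorem numDeals_le (B : Fin n → ℝ) : numDeals A B ≤ n :=
  (card_filter_le _ _).trans (card_range n).le

theorem lt_numDeals_iff (B : Fin n → ℝ) {i : ℕ} :
    i < numDeals A B ↔ i < n ∧ sortedAsks A i ≤ sortedBids B i :=
  lt_card_filter_range_iff fun _ _ hab hbn hb =>
    (sortedAsks_mono A hab hbn).trans (hb.trans (sortedBids_anti B hab hbn))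

theorem le_numDeals (B : Fin n → ℝ) {m : ℕ} (hm : m ≤ n)
    (h : ∀ i < m, sortedAsks A i ≤ sortedBids B i) : m ≤ numDeals A B := by
  by_contra! hlt
  have := (lt_numDeals_iff A B).2 ⟨hlt.trans_le hm, h _ hlt⟩
  omega

theorem numDeals_mono {B B' : Fin n → ℝ} (h : B ≤ B') : numDeals A B ≤ numDeals A B' :=
  card_le_card (monotone_filter_right _ fun i _ hi => hi.trans (sortedBids_mono h i))

end Deals

section Mechanism
variable (A B : Fin n → ℝ) (j : Fin n) {x y : ℝ}

theorem buyerRank_lt_numDeals_of_buyerWins (hw : buyerWins A B j) :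
    buyerRank B j < numDeals A B := by
  unfold buyerWins at hw
  split_ifs at hw <;> omega

theorem price_le_of_buyerWins (hw : buyerWins A B j) : price A B ≤ B j := by
  have hK := numDeals_le A B
  unfold buyerWins at hw
  rw [price, ← sortedBids_buyerRank B j]
  split_ifs at hw ⊢ with hc
  · exact hc.2.2.trans (sortedBids_anti B (by omega) (by omega))
  · exact sortedBids_anti B (by omega) (by omega)

/- Lowering the bid from `y` to `x` loses no deal: up to the buyer's rank the bids are at least
`x`, which clears those asks, and beyond it the sorted bids do not change. -/
theorem numDeals_update_eq (hxy : x ≤ y)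
    (hs : sortedAsks A (buyerRank (update B j x) j) ≤ x) :
    numDeals A (update B j x) = numDeals A (update B j y) := by
  set r := buyerRank (update B j x) j
  have hrn : r < n := buyerRank_lt _ j
  refine le_antisymm (numDeals_mono A (update_le_update_iff'.2 hxy))
    (le_numDeals A _ (numDeals_le A _) fun i hi => ?_)
  obtain ⟨hin, hdeal⟩ := (lt_numDeals_iff A _).1 hi
  rcases le_or_gt i r with hir | hri
  · calc sortedAsks A i ≤ sortedAsks A r := sortedAsks_mono A hir hrn
      _ ≤ x := hs
      _ = sortedBids (update B j x) r := (sortedBids_update_buyerRank B j x).symm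
      _ ≤ sortedBids (update B j x) i := sortedBids_anti _ hir hrn
  · rwa [← sortedBids_update_of_buyerRank_lt B j hxy hin hri]

theorem buyerWins_update_of_buyerRank_add_one_lt (hxy : x ≤ y)
    (hr : buyerRank (update B j x) j + 1 < numDeals A (update B j y)) :
    buyerWins A (update B j x) j := by
  set r := buyerRank (update B j x) j
  have hn : r + 1 < n := (lt_numDeals_iff A _).1 hr |>.1
  have hs : sortedAsks A r ≤ x :=
    calc sortedAsks A r ≤ sortedAsks A (r + 1) := sortedAsks_mono A (by omega) hn
      _ ≤ sortedBids (update B j y) (r + 1) := ((lt_numDeals_iff A _).1 hr).2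
      _ = sortedBids (update B j x) (r + 1) :=
          sortedBids_update_of_buyerRank_lt B j hxy hn (by omega)
      _ ≤ sortedBids (update B j x) r := sortedBids_anti _ (by omega) hn
      _ = x := sortedBids_update_buyerRank B j x
  have hK := numDeals_update_eq A B j hxy hs
  unfold buyerWins
  split_ifs <;> omega

theorem buyerWins_update_mono (hxy : x ≤ y) (hw : buyerWins A (update B j x) j) :
    buyerWins A (update B j y) j ∧ price A (update B j y) = price A (update B j x) := by
  set K := numDeals A (update B j x)
  have hr := buyerRank_lt_numDeals_of_buyerWins A _ j hw
  have hK : K = numDeals A (update B j y) := by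
    refine numDeals_update_eq A B j hxy ?_
    simpa using ((lt_numDeals_iff A _).1 hr).2
  have hry : buyerRank (update B j y) j ≤ buyerRank (update B j x) j :=
    buyerRank_update_antitone B j hxy
  have hKn := numDeals_le A (update B j x)
  unfold buyerWins at hw ⊢
  unfold price
  by_cases hc : caseOne A (update B j x)
  · have hcy : caseOne A (update B j y) := by
      obtain ⟨h1, h2, h3⟩ := hc
      refine ⟨hK ▸ h1, hK ▸ h2, ?_⟩
      rw [← hK]
      exact h3.trans (sortedBids_mono (update_le_update_iff'.2 hxy) _)
    simp only [hc, hcy, if_true, ← hK] at hw ⊢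
    exact ⟨by omega, rfl⟩
  · simp only [hc, if_false] at hw ⊢
    have hb : sortedBids (update B j y) (K - 1) = sortedBids (update B j x) (K - 1) :=
      sortedBids_update_of_buyerRank_lt B j hxy (by omega) (by omega)
    have hcy : ¬ caseOne A (update B j y) := by
      rwa [caseOne, ← hK, hb]
    simp only [hcy, if_false, ← hK, hb]
    exact ⟨by omega, rfl⟩

theorem le_price_of_not_buyerWins (hxy : x ≤ y) (hwy : buyerWins A (update B j y) j)
    (hwx : ¬ buyerWins A (update B j x) j) : x ≤ price A (update B j y) := by
  set K := numDeals A (update B j y)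
  set r := buyerRank (update B j x) j
  have hrn : r < n := buyerRank_lt _ j
  have hKr : K ≤ r + 1 := by
    by_contra! h
    exact hwx (buyerWins_update_of_buyerRank_add_one_lt A B j hxy h)
  have hx : ∀ i ≤ r, x ≤ sortedBids (update B j y) i := fun i hi =>
    calc x = sortedBids (update B j x) r := (sortedBids_update_buyerRank B j x).symm
      _ ≤ sortedBids (update B j x) i := sortedBids_anti _ hi hrn
      _ ≤ sortedBids (update B j y) i := sortedBids_mono (update_le_update_iff'.2 hxy) i
  unfold buyerWins at hwy
  unfold price
  split_ifs at hwy ⊢ with hc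
  · obtain ⟨hK1, hKn, hsK⟩ := hc
    by_contra! hlt
    -- if `s_K < x`, then either `x` sits at rank `K - 1` and already satisfies case 1, or
    -- `x ≤ b_K < s_K` contradicts the maximality of `K`
    rcases Nat.lt_or_ge r K with hrK | hKr'
    · have hKx : numDeals A (update B j x) = K := numDeals_update_eq A B j hxy
        ((sortedAsks_mono A (by omega) hKn).trans hlt.le)
      have hcx : caseOne A (update B j x) := by
        refine ⟨by omega, by omega, ?_⟩
        rw [hKx, show K - 1 = r by omega, sortedBids_update_buyerRank]
        exact hlt.le
      apply hwx
      rw [buyerWins, if_pos hcx]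
      omega
    · have hfail : ¬ sortedAsks A K ≤ sortedBids (update B j y) K := fun h =>
        lt_irrefl K ((lt_numDeals_iff A _).2 ⟨hKn, h⟩)
      linarith [hx K hKr']
  · exact hx _ (by omega)

end Mechanism

end SBBA

/-- SBBA is dominant-strategy truthful for buyers: for every buyer `j` with true
valuation `v`, every profile of the other agents' reports, and every realization of
the randomness (buyers' outcomes are deterministic), bidding the true value `v`
yields at least the utility of any other bid `β`, where the utility is `v - p` if
the buyer trades at price `p` and `0` otherwise. -/
theorem sbba_buyer_truthful {n : ℕ} (A B : Fin n → ℝ) (j : Fin n) (v β : ℝ) :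
    (if buyerWins A (Function.update B j β) j
      then v - price A (Function.update B j β) else 0) ≤
    (if buyerWins A (Function.update B j v) j
      then v - price A (Function.update B j v) else 0) :=
  SBBA.utility_le_of_threshold_price
    (fun x hw => by simpa using SBBA.price_le_of_buyerWins A _ j hw)
    (fun _ _ hxy => SBBA.buyerWins_update_mono A B j hxy)
    (fun _ _ hxy => SBBA.le_price_of_not_buyerWins A B j hxy) v β
end

section
/- For a single buyer with valuation b and a single seller with valuation s drawn from arbitrary reals, there is no deterministic mechanism mapping reported (b, s) to a trade decision and a single price that is truthful, individually rational, budget-balanced, and trades if and only if b > s. Specifically: if a deterministic, IR, budget-balanced mechanism trades exactly when b > s at some price p(b,s) ∈ [s, b], then it is not truthful: there exist reports where some agent strictly gains by misreporting. -/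
open scoped Classical

/-- Bilateral-trade impossibility: there is no deterministic mechanism on reports
`(b, s) ∈ ℝ²` that trades exactly when `b > s`, is individually rational
(the single price `p b s` satisfies `s ≤ p b s ≤ b` whenever trade occurs),
is budget-balanced (a single price paid by the buyer to the seller), and is
truthful for both the buyer and the seller.  I.e., for any price function `p`
satisfying IR, truthfulness fails: some agent can strictly gain by misreporting. -/
theorem bilateral_trade_impossibility (p : ℝ → ℝ → ℝ)
    (hIR : ∀ b s : ℝ, s < b → s ≤ p b s ∧ p b s ≤ b) :
    ¬ ((∀ v r s : ℝ,
          (if s < r then v - p r s else 0) ≤ (if s < v then v - p v s else 0)) ∧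
       (∀ c r b : ℝ,
          (if r < b then p b r - c else 0) ≤ (if c < b then p b c - c else 0))) := by
  rintro ⟨hB, hS⟩
  -- buyer truthfulness: price independent of buyer report when both above s
  have hbuy : ∀ v r s : ℝ, s < v → s < r → p v s = p r s := by
    intro v r s hv hr
    have h1 := hB v r s
    have h2 := hB r v s
    simp only [if_pos hv, if_pos hr] at h1 h2
    linarith
  have hsell : ∀ c r b : ℝ, c < b → r < b → p b c = p b r := by
    intro c r b hc hr
    have h1 := hS c r b
    have h2 := hS r c b
    simp only [if_pos hc, if_pos hr] at h1 h2
    linarith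
  set c := p 1 0 with hc
  have hconst : ∀ b s : ℝ, s < b → p b s = c := by
    intro b s hsb
    obtain ⟨B, hB1⟩ := exists_gt (max (max b s) 1)
    have hbB : b < B := lt_of_le_of_lt (le_trans (le_max_left _ _) (le_max_left _ _)) hB1
    have hsB : s < B := lt_of_le_of_lt (le_trans (le_max_right _ _) (le_max_left _ _)) hB1
    have h1B : (1:ℝ) < B := lt_of_le_of_lt (le_max_right _ _) hB1
    have h0B : (0:ℝ) < B := by linarith
    calc p b s = p B s := hbuy b B s hsb hsB
      _ = p B 0 := hsell s 0 B hsB h0B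
      _ = p 1 0 := hbuy B 1 0 h0B one_pos
  have h1 : p (c+2) (c+1) = c := hconst _ _ (by linarith)
  have h2 := (hIR (c+2) (c+1) (by linarith)).1
  linarith
end

section
/- In a spatially-distributed market price equilibrium within one commercial-relationship component, for any two markets i and j in the component there exists a constant Δ_{i,j} such that every equilibrium price vector satisfies p_j = p_i + Δ_{i,j}; in particular, if there is positive trade directly from market i to market j then Δ_{i,j} = Cost[i,j]. -/
/-- In a spatially-distributed market, within one commercial-relationship component
(markets `i` and `j` connected by a chain of pairs with positive trade in the optimal
flow), there is a constant `Δ` such that every equilibrium price vector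
(one satisfying `p c = p a + Cost a c` whenever goods flow from `a` to `c`)
satisfies `p j = p i + Δ`; and if there is positive trade directly from `i` to `j`,
then `Δ = Cost i j`. -/
theorem sdm_price_difference_constant (M : Type*) (Cost flow : M → M → ℝ) (i j : M)
    (hconn : Relation.ReflTransGen (fun a c => 0 < flow a c ∨ 0 < flow c a) i j) :
    ∃ Δ : ℝ,
      (∀ p : M → ℝ, (∀ a c, 0 < flow a c → p c = p a + Cost a c) → p j = p i + Δ) ∧
      (0 < flow i j → Δ = Cost i j) := by
  by_cases hij : 0 < flow i j
  · exact ⟨Cost i j, fun p hp => hp i j hij, fun _ => rfl⟩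
  · have : ∃ Δ : ℝ, ∀ p : M → ℝ,
        (∀ a c, 0 < flow a c → p c = p a + Cost a c) → p j = p i + Δ := by
      clear hij
      induction hconn with
      | refl => exact ⟨0, fun p _ => by ring⟩
      | @tail b c hib hbj ih =>
        obtain ⟨Δ, hΔ⟩ := ih
        rcases hbj with h | h
        · exact ⟨Δ + Cost b c, fun p hp => by rw [hp _ _ h, hΔ p hp]; ring⟩
        · refine ⟨Δ - Cost c b, fun p hp => ?_⟩
          have := hp _ _ h
          have := hΔ p hp
          linarith
    obtain ⟨Δ, hΔ⟩ := this
    exact ⟨Δ, hΔ, fun h => absurd h hij⟩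
end

section
/- Setting the single price to s_{k+1} unconditionally (rather than min(s_{k+1}, b_k)) can yield zero gain-from-trade while the optimum is positive: there exist valuations (e.g., n = 2: s = (0, 2), b = (1, 0)) where k ≥ 1, the price s_{k+1} exceeds every buyer's valuation, so no buyer is willing to trade at that price, and the gain-from-trade achieved is 0 while the optimal gain-from-trade Σ_{i≤k}(b_i - s_i) > 0. -/
open scoped Classical

/-- Setting the single price to `s (k+1)` unconditionally can yield zero
gain-from-trade while the optimum is positive: there exist sorted valuations
(e.g. `n = 2`, `s = (0, 2)`, `b = (1, 0)`, `k = 1`) where `k ≥ 1`, the price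
`s (k+1)` exceeds every buyer's valuation — so no buyer trades at that price and the
achieved gain-from-trade is `0` — while the optimal gain-from-trade
`Σ_{i ≤ k} (b i - s i)` is positive. -/
theorem price_skplus1_can_fail :
    ∃ (n k : ℕ) (s b : ℕ → ℝ),
      (∀ i j, 1 ≤ i → i ≤ j → j ≤ n → s i ≤ s j) ∧
      (∀ i j, 1 ≤ i → i ≤ j → j ≤ n → b j ≤ b i) ∧
      1 ≤ k ∧ k < n ∧ s k ≤ b k ∧
      (∀ i, k < i → i ≤ n → b i < s i) ∧
      -- the price s (k+1) exceeds every buyer's valuation: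
      (∀ i, 1 ≤ i → i ≤ n → b i < s (k + 1)) ∧
      -- so no buyer is willing to trade at that price (no deals execute, GFT = 0):
      ((Finset.Icc 1 n).filter fun i => s (k + 1) ≤ b i) = ∅ ∧
      -- while the optimal gain-from-trade is positive:
      0 < ∑ i ∈ Finset.Icc 1 k, (b i - s i) := by
  refine ⟨2, 1, fun i => if i ≤ 1 then 0 else 2, fun i => if i ≤ 1 then 1 else 0,
    ?_, ?_, le_refl 1, one_lt_two, ?_, ?_, ?_, ?_, ?_⟩
  · intro i j hi hij hj
    by_cases h : i ≤ 1 <;> by_cases h' : j ≤ 1 <;>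
      first | omega | (simp only [h, h', if_true, if_false]; norm_num)
  · intro i j hi hij hj
    by_cases h : i ≤ 1 <;> by_cases h' : j ≤ 1 <;>
      first | omega | (simp only [h, h', if_true, if_false]; norm_num)
  · norm_num
  · intro i hi hi2; have : ¬ i ≤ 1 := by omega
    simp [this]
  · intro i hi hi2
    by_cases h : i ≤ 1 <;> simp [h] <;> norm_num
  · ext i
    simp only [Finset.mem_filter, Finset.mem_Icc, Finset.notMem_empty, iff_false]
    rintro ⟨⟨h1, h2⟩, h3⟩
    by_cases h : i ≤ 1 <;> simp [h] at h3 <;> linarith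
  · rw [Finset.Icc_self, Finset.sum_singleton]; norm_num
end
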